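/- arXiv:2506.09564 — 4 statements merged into one kernel-verified Lean document; each statement's English description precedes it below -/
import Mathlib

section
/- Let ε ∈ (0,1), f : ℝ → ℝ continuous with x·f(x) < 0 for x ≠ 0 and |f(x)| < |x| for |x| ≥ A₀, and let R ≥ max_{|x|≤A₀}|f(x)|. If b : [-1-ε/2, 0] → ℝ is continuous with sup-norm at most R, then the continuation x_b defined by x_b(t) = b(t) on [-1-ε/2,0) and x_b(t) = (1/ε)∫_{t-1-ε/2}^{t-1+ε/2} f(x_b(s)) ds for t ≥ 0 satisfies |x_b(t)| ≤ R for all t ≥ 0. -/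
theorem continuation_uniform_bound (ε : ℝ) (hε : ε ∈ Set.Ioo (0:ℝ) 1)
    (f : ℝ → ℝ) (hf : Continuous f)
    (hfb : ∀ x : ℝ, x ≠ 0 → x * f x < 0)
    (A₀ : ℝ) (hA₀ : 0 < A₀) (hsub : ∀ x : ℝ, A₀ ≤ |x| → |f x| < |x|)
    (R : ℝ) (hR : ∀ x : ℝ, |x| ≤ A₀ → |f x| ≤ R)
    (b : ℝ → ℝ) (hb : ContinuousOn b (Set.Icc (-1 - ε/2) 0))
    (hbR : ∀ t ∈ Set.Icc (-1 - ε/2) (0:ℝ), |b t| ≤ R)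
    (xb : ℝ → ℝ)
    (hxb0 : ∀ t ∈ Set.Ico (-1 - ε/2) (0:ℝ), xb t = b t)
    (hxb : ∀ t : ℝ, 0 ≤ t →
      xb t = (1/ε) * ∫ s in (t - 1 - ε/2)..(t - 1 + ε/2), f (xb s)) :
    ∀ t : ℝ, 0 ≤ t → |xb t| ≤ R := by
  obtain ⟨hε0, hε1⟩ := hε
  have fkey : ∀ x : ℝ, |x| ≤ R → |f x| ≤ R := by
    intro x hx
    rcases le_or_gt |x| A₀ with h | h
    · exact hR x h
    · exact le_trans (hsub x h.le).le hx
  have key : ∀ n : ℕ, ∀ t : ℝ, -1 - ε/2 ≤ t → t < n * (1 - ε/2) → |xb t| ≤ R := by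
    intro n
    induction n with
    | zero =>
      intro t ht1 ht2
      simp only [Nat.cast_zero, zero_mul] at ht2
      rw [hxb0 t ⟨ht1, ht2⟩]
      exact hbR t ⟨ht1, ht2.le⟩
    | succ n ih =>
      intro t ht1 ht2
      rcases lt_or_ge t 0 with h0 | h0
      · rw [hxb0 t ⟨ht1, h0⟩]
        exact hbR t ⟨ht1, h0.le⟩
      · rw [hxb t h0]
        have hle : t - 1 - ε/2 ≤ t - 1 + ε/2 := by linarith
        have hcast : ((n : ℝ) + 1 : ℝ) * (1 - ε/2) = (↑(n+1) : ℝ) * (1 - ε/2) := by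
          push_cast; ring
        have hbound : ∀ s ∈ Set.uIoc (t - 1 - ε/2) (t - 1 + ε/2), ‖f (xb s)‖ ≤ R := by
          intro s hs
          rw [Set.uIoc_of_le hle] at hs
          have hs1 : -1 - ε/2 ≤ s := by linarith [hs.1]
          have hs2 : s < n * (1 - ε/2) := by
            have := hs.2
            have h2 : t < ((n : ℝ) + 1) * (1 - ε/2) := by rw [hcast]; exact_mod_cast ht2
            nlinarith
          exact fkey _ (ih s hs1 hs2)
        have hI : ‖∫ s in (t - 1 - ε/2)..(t - 1 + ε/2), f (xb s)‖ ≤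
            R * |(t - 1 + ε/2) - (t - 1 - ε/2)| :=
          intervalIntegral.norm_integral_le_of_norm_le_const hbound
        have habs : |(t - 1 + ε/2) - (t - 1 - ε/2)| = ε := by
          rw [abs_of_nonneg (by linarith)]; ring
        rw [habs] at hI
        calc |(1/ε) * ∫ s in (t - 1 - ε/2)..(t - 1 + ε/2), f (xb s)|
            = (1/ε) * ‖∫ s in (t - 1 - ε/2)..(t - 1 + ε/2), f (xb s)‖ := by
              rw [abs_mul, abs_of_pos (by positivity)]; rfl
          _ ≤ (1/ε) * (R * ε) := by
              apply mul_le_mul_of_nonneg_left hI (by positivity)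
          _ = R := by field_simp
  intro t ht
  obtain ⟨n, hn⟩ := exists_nat_gt (t / (1 - ε/2))
  have h12 : (0:ℝ) < 1 - ε/2 := by linarith
  have : t < n * (1 - ε/2) := by
    rw [div_lt_iff₀ h12] at hn; linarith
  exact key n t (by linarith) this
end

section
/- Let ε ∈ (0,1), f continuous with x·f(x) < 0 for x ≠ 0, and b : [-1-ε/2,0] → ℝ continuous with b(t) < 0 for t in a neighborhood of 0. If the continuation x_b satisfies x_b(t) < 0 for all t ≥ 0, then x_b(1+ε/2) = (1/ε)∫_0^ε f(x_b(s)) ds > 0, a contradiction; hence the first positive zero z₁(b) = sup{ t ≥ 0 : x_b(s) < 0 for all s ∈ [0,t] } is finite. -/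
theorem first_zero_finite (ε : ℝ) (hε : ε ∈ Set.Ioo (0:ℝ) 1)
    (f : ℝ → ℝ) (hf : Continuous f)
    (hfb : ∀ x : ℝ, x ≠ 0 → x * f x < 0)
    (b : ℝ → ℝ) (hb : ContinuousOn b (Set.Icc (-1 - ε/2) 0))
    (hbneg : ∃ δ > (0:ℝ), ∀ t ∈ Set.Ioc (-δ) (0:ℝ), b t < 0)
    (xb : ℝ → ℝ) (hxbc : ContinuousOn xb (Set.Ici 0))
    (hxb0 : ∀ t ∈ Set.Ico (-1 - ε/2) (0:ℝ), xb t = b t)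
    (hxb : ∀ t : ℝ, 0 ≤ t →
      xb t = (1/ε) * ∫ s in (t - 1 - ε/2)..(t - 1 + ε/2), f (xb s))
    (hx0 : xb 0 < 0) :
    (xb (1 + ε/2) = (1/ε) * ∫ s in (0:ℝ)..ε, f (xb s)) ∧
    ((∀ t : ℝ, 0 ≤ t → xb t < 0) → 0 < (1/ε) * ∫ s in (0:ℝ)..ε, f (xb s)) ∧
    ¬ (∀ t : ℝ, 0 ≤ t → xb t < 0) ∧
    BddAbove {t : ℝ | 0 ≤ t ∧ ∀ s ∈ Set.Icc 0 t, xb s < 0} := by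
  obtain ⟨hε0, hε1⟩ := hε
  have h1 : xb (1 + ε/2) = (1/ε) * ∫ s in (0:ℝ)..ε, f (xb s) := by
    have := hxb (1 + ε/2) (by linarith)
    have e1 : 1 + ε/2 - 1 - ε/2 = (0:ℝ) := by ring
    have e2 : 1 + ε/2 - 1 + ε/2 = ε := by ring
    rwa [e1, e2] at this
  have h2 : (∀ t : ℝ, 0 ≤ t → xb t < 0) → 0 < (1/ε) * ∫ s in (0:ℝ)..ε, f (xb s) := by
    intro hneg
    have hpos : ∀ s ∈ Set.Ioo (0:ℝ) ε, 0 < f (xb s) := by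
      intro s hs
      have hxs : xb s < 0 := hneg s hs.1.le
      have := hfb (xb s) (ne_of_lt hxs)
      nlinarith
    have hint : IntervalIntegrable (fun s => f (xb s)) MeasureTheory.volume 0 ε := by
      apply ContinuousOn.intervalIntegrable
      apply hf.comp_continuousOn
      apply hxbc.mono
      intro x hx
      rcases Set.mem_uIcc.1 hx with h | h
      · exact h.1
      · linarith [h.1, h.2]
    have := intervalIntegral.intervalIntegral_pos_of_pos_on hint hpos hε0
    positivity
  have h3 : ¬ (∀ t : ℝ, 0 ≤ t → xb t < 0) := by
    intro hneg
    have := hneg (1 + ε/2) (by linarith)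
    rw [h1] at this
    linarith [h2 hneg]
  refine ⟨h1, h2, h3, ?_⟩
  push_neg at h3
  obtain ⟨t₀, ht₀0, ht₀⟩ := h3
  refine ⟨t₀, fun t ht => ?_⟩
  by_contra hlt
  push_neg at hlt
  exact absurd (ht.2 t₀ ⟨ht₀0, hlt.le⟩) (not_lt.2 ht₀)
end

section
/- Let ε ∈ (0,1/4) and τ ∈ (0, ε]. Suppose b : [-1-ε/2,0] → ℝ is continuous, b(t) > 0 for t ∈ (-1-ε/2, -τ), and b(t) < 0 for t ∈ (-τ, 0]. Let f be continuous with x·f(x) < 0 for x ≠ 0 and x_b its continuation. Then x_b(1-τ-ε/2) < 0 and x_b(1-τ+ε/2) > 0; consequently the first positive zero z₁(b) of x_b satisfies 1-τ-ε/2 < z₁(b) < 1-τ+ε/2. -/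
open Set MeasureTheory intervalIntegral

namespace intervalIntegral

theorem intervalIntegral_neg_of_neg_on {f : ℝ → ℝ} {a b : ℝ}
    (hfi : IntervalIntegrable f volume a b) (hneg : ∀ x ∈ Ioo a b, f x < 0) (hab : a < b) :
    ∫ x in a..b, f x < 0 := by
  have h := intervalIntegral_pos_of_pos_on hfi.neg (fun x hx => neg_pos.2 (hneg x hx)) hab
  simpa only [Pi.neg_apply, integral_neg, neg_pos] using h

end intervalIntegral

theorem intervalIntegrable_of_eqOn_Ioo {g h : ℝ → ℝ} {p q : ℝ} (hpq : p ≤ q)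
    (hh : ContinuousOn h (Icc p q)) (hgh : EqOn g h (Ioo p q)) :
    IntervalIntegrable g volume p q := by
  rw [intervalIntegrable_iff_integrableOn_Ioo_of_le hpq]
  exact ((hh.integrableOn_Icc).mono_set Ioo_subset_Icc_self).congr_fun hgh.symm measurableSet_Ioo

/-- `sSup (negativeUntil g)` is the first zero `z₁` of `g` on `[0, ∞)`. -/
def negativeUntil (g : ℝ → ℝ) : Set ℝ :=
  {t | 0 ≤ t ∧ ∀ s ∈ Icc 0 t, g s < 0}

section negativeUntil

variable {g : ℝ → ℝ}

theorem negativeUntil_subset_Iio {z : ℝ} (hz0 : 0 ≤ z) (hz : 0 ≤ g z) :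
    negativeUntil g ⊆ Iio z :=
  fun _ ht => lt_of_not_ge fun hzt => (ht.2 z ⟨hz0, hzt⟩).not_ge hz

theorem exists_gt_mem_negativeUntil {a : ℝ} (hg : ContinuousWithinAt g (Ici 0) a) (ha : 0 ≤ a)
    (hneg : ∀ s ∈ Icc 0 a, g s < 0) : ∃ t ∈ negativeUntil g, a < t := by
  obtain ⟨δ, hδ, hball⟩ := Metric.mem_nhdsWithin_iff.1 (hg (Iio_mem_nhds (hneg a ⟨ha, le_rfl⟩)))
  refine ⟨a + δ / 2, ⟨by linarith, fun s hs => ?_⟩, by linarith⟩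
  rcases le_or_gt s a with hsa | has
  · exact hneg s ⟨hs.1, hsa⟩
  · refine hball ⟨?_, hs.1⟩
    rw [Metric.mem_ball, Real.dist_eq, abs_lt]
    constructor <;> linarith [hs.2]

theorem sSup_negativeUntil_mem_Ioo {a c : ℝ} (hg : ContinuousOn g (Ici 0)) (ha : 0 ≤ a)
    (hneg : ∀ s ∈ Icc 0 a, g s < 0) (hc : 0 < g c) (hac : a ≤ c) :
    sSup (negativeUntil g) ∈ Ioo a c := by
  obtain ⟨z, ⟨haz, hzc⟩, hz⟩ : ∃ z ∈ Icc a c, g z = 0 :=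
    intermediate_value_Icc hac (hg.mono fun s hs => ha.trans hs.1) ⟨(hneg a ⟨ha, le_rfl⟩).le, hc.le⟩
  have hzc' : z < c := hzc.lt_of_ne fun h => hc.ne' (h ▸ hz)
  have hbdd : negativeUntil g ⊆ Iio z := negativeUntil_subset_Iio (ha.trans haz) hz.ge
  obtain ⟨t, ht, hat⟩ := exists_gt_mem_negativeUntil (hg a ha) ha hneg
  exact ⟨hat.trans_le (le_csSup ⟨z, fun _ hs => (hbdd hs).le⟩ ht),
    (csSup_le ⟨t, ht⟩ fun _ hs => (hbdd hs).le).trans_lt hzc'⟩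

end negativeUntil

theorem first_zero_localization (ε τ : ℝ) (hε : ε ∈ Set.Ioo (0:ℝ) (1/4))
    (hτ : τ ∈ Set.Ioc (0:ℝ) ε)
    (f : ℝ → ℝ) (hf : Continuous f)
    (hfb : ∀ x : ℝ, x ≠ 0 → x * f x < 0)
    (b : ℝ → ℝ) (hb : ContinuousOn b (Set.Icc (-1 - ε/2) 0))
    (hbpos : ∀ t ∈ Set.Ioo (-1 - ε/2) (-τ), 0 < b t)
    (hbneg : ∀ t ∈ Set.Ioc (-τ) (0:ℝ), b t < 0)
    (xb : ℝ → ℝ) (hxbc : ContinuousOn xb (Set.Ici 0))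
    (hxb0 : ∀ t ∈ Set.Ico (-1 - ε/2) (0:ℝ), xb t = b t)
    (hxb : ∀ t : ℝ, 0 ≤ t →
      xb t = (1/ε) * ∫ s in (t - 1 - ε/2)..(t - 1 + ε/2), f (xb s)) :
    xb (1 - τ - ε/2) < 0 ∧ 0 < xb (1 - τ + ε/2) ∧
    1 - τ - ε/2 < sSup {t : ℝ | 0 ≤ t ∧ ∀ s ∈ Set.Icc 0 t, xb s < 0} ∧
    sSup {t : ℝ | 0 ≤ t ∧ ∀ s ∈ Set.Icc 0 t, xb s < 0} < 1 - τ + ε/2 := by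
  obtain ⟨hε0, hε4⟩ := hε
  obtain ⟨hτ0, hτε⟩ := hτ
  have hf_neg : ∀ x, 0 < x → f x < 0 := fun x hx => neg_of_mul_neg_right (hfb x hx.ne') hx.le
  have hf_pos : ∀ x, x < 0 → 0 < f x := fun x hx => pos_of_mul_neg_right (hfb x hx.ne) hx.le
  have hint_past : ∀ p q, -1 - ε/2 ≤ p → p ≤ q → q ≤ 0 →
      IntervalIntegrable (fun s => f (xb s)) volume p q := fun p q hp hpq hq =>
    intervalIntegrable_of_eqOn_Ioo hpq (hf.comp_continuousOn (hb.mono (Icc_subset_Icc hp hq)))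
      fun s hs => congrArg f (hxb0 s ⟨hp.trans hs.1.le, hs.2.trans_le hq⟩)
  -- For `t ≤ 1 - τ - ε/2` the delay window lies where `b > 0`.
  have hxb_neg : ∀ t ∈ Icc 0 (1 - τ - ε/2), xb t < 0 := by
    rintro t ⟨ht0, ht⟩
    have hint := hint_past (t - 1 - ε/2) (t - 1 + ε/2) (by linarith) (by linarith) (by linarith)
    have hI := intervalIntegral_neg_of_neg_on hint (fun s hs => hf_neg _ <| by
      rw [hxb0 s ⟨by linarith [hs.1], by linarith [hs.2]⟩]
      exact hbpos s ⟨by linarith [hs.1], by linarith [hs.2]⟩) (by linarith)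
    rw [hxb t ht0]
    exact mul_neg_of_pos_of_neg (by positivity) hI
  -- At `t = 1 - τ + ε/2` the window is `[-τ, ε - τ]`, where `xb < 0` since `ε - τ ≤ 1 - τ - ε/2`.
  have hxb_pos : 0 < xb (1 - τ + ε/2) := by
    have hint : IntervalIntegrable (fun s => f (xb s)) volume (-τ) (ε - τ) :=
      (hint_past (-τ) 0 (by linarith) (by linarith) le_rfl).trans
      ((hf.comp_continuousOn (hxbc.mono fun s hs => hs.1)).intervalIntegrable_of_Icc (by linarith))
    have hI := intervalIntegral_pos_of_pos_on hint (fun s hs => hf_pos _ <| by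
      rcases lt_or_ge s 0 with h | h
      · rw [hxb0 s ⟨by linarith [hs.1], h⟩]
        exact hbneg s ⟨hs.1, h.le⟩
      · exact hxb_neg s ⟨h, by linarith [hs.2]⟩) (by linarith)
    rw [hxb _ (by linarith), show 1 - τ + ε/2 - 1 - ε/2 = -τ by ring,
      show 1 - τ + ε/2 - 1 + ε/2 = ε - τ by ring]
    positivity
  have hz := sSup_negativeUntil_mem_Ioo hxbc (by linarith) hxb_neg hxb_pos (by linarith)
  exact ⟨hxb_neg _ ⟨by linarith, le_rfl⟩, hxb_pos, hz.1, hz.2⟩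
end

section
/- Let ε ∈ (0,1/4), f ∈ C¹ near 0 with f continuous and x·f(x) < 0 for x ≠ 0, and b ∈ 𝓑^α (so that x_b changes sign from negative to positive at its first positive zero z₁(b)). If x_b is differentiable at z₁(b), then x_b'(z₁(b)) = ε⁻¹[f(x_b(z₁(b)-1+ε/2)) - f(x_b(z₁(b)-1-ε/2))] > 0. -/
/-! The window integral is differentiated from the right at `z1`, by the one-sided fundamental
theorem of calculus at both ends of the window: `f ∘ xb` is only piecewise continuous, with a
possible jump at `0` where the initial datum `b` hands over to the solution, and the right
derivative is then identified with `deriv xb z1` by differentiability. The upper end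
`z1 - 1 + ε/2` lies in `(-τ, z1)`, where `xb < 0`, and the lower end in `(-1 - ε/2, -τ)`, where
`xb = b > 0`, so negative feedback makes the difference of the `f`-values positive. -/

open Set MeasureTheory intervalIntegral

theorem locallyIntegrableOn_Ici_of_eqOn_Ico {g φ : ℝ → ℝ} {a c : ℝ}
    (hφ : ContinuousOn φ (Icc a c)) (hgφ : EqOn g φ (Ico a c)) (hg : ContinuousOn g (Ici c)) :
    LocallyIntegrableOn g (Ici a) := by
  rw [locallyIntegrableOn_iff isClosed_Ici.isLocallyClosed]
  intro k hk hkc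
  obtain ⟨R, hR⟩ := hkc.bddAbove
  have hleft : IntegrableOn g (Ico a c) :=
    (hφ.integrableOn_Icc.mono_set Ico_subset_Icc_self).congr_fun hgφ.symm measurableSet_Ico
  have hright : IntegrableOn g (Icc c R) := (hg.mono Icc_subset_Ici_self).integrableOn_Icc
  refine (hleft.union hright).mono_set fun x hx => ?_
  rcases lt_or_ge x c with hxc | hcx
  · exact Or.inl ⟨hk hx, hxc⟩
  · exact Or.inr ⟨hcx, hR hx⟩

theorem continuousWithinAt_Ici_of_eqOn_Ico {g φ : ℝ → ℝ} {a c x : ℝ}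
    (hφ : ContinuousOn φ (Icc a c)) (hgφ : EqOn g φ (Ico a c)) (hg : ContinuousOn g (Ici c))
    (hax : a < x) : ContinuousWithinAt g (Ici x) x := by
  rcases lt_or_ge x c with hxc | hcx
  · have hgφx : φ =ᶠ[nhds x] g :=
      Filter.eventuallyEq_of_mem (Ioo_mem_nhds hax hxc) (hgφ.mono Ioo_subset_Ico_self).symm
    exact ((hφ.continuousAt (Icc_mem_nhds hax hxc)).congr hgφx).continuousWithinAt
  · exact (hg x hcx).mono (Ici_subset_Ici.2 hcx)


theorem intervalIntegrable_of_locallyIntegrableOn_Ici {g : ℝ → ℝ} {a c d : ℝ}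
    (hg : LocallyIntegrableOn g (Ici a)) (hc : a ≤ c) (hd : a ≤ d) :
    IntervalIntegrable g volume c d :=
  (hg.integrableOn_compact_subset (fun _ hx => (le_inf hc hd).trans hx.1)
    isCompact_uIcc).intervalIntegrable

theorem hasDerivWithinAt_Ici_integral_of_locallyIntegrableOn {g : ℝ → ℝ} {a x : ℝ}
    (hg : LocallyIntegrableOn g (Ici a)) (hax : a ≤ x)
    (hgx : ContinuousWithinAt g (Ici x) x) :
    HasDerivWithinAt (fun y => ∫ s in a..y, g s) (g x) (Ici x) x :=
  integral_hasDerivWithinAt_right (intervalIntegrable_of_locallyIntegrableOn_Ici hg le_rfl hax)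
    ⟨Ici a, Filter.mem_of_superset self_mem_nhdsWithin
      (Ioi_subset_Ici_self.trans (Ici_subset_Ici.2 hax)), hg.aestronglyMeasurable⟩
    (hgx.mono Ioi_subset_Ici_self)

theorem hasDerivWithinAt_Ici_integral_window {g : ℝ → ℝ} {a p q t : ℝ}
    (hg : LocallyIntegrableOn g (Ici a)) (hap : a ≤ t + p) (hpq : p ≤ q)
    (hgp : ContinuousWithinAt g (Ici (t + p)) (t + p))
    (hgq : ContinuousWithinAt g (Ici (t + q)) (t + q)) :
    HasDerivWithinAt (fun s => ∫ x in (s + p)..(s + q), g x) (g (t + q) - g (t + p)) (Ici t) t := by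
  have hshift : ∀ r, a ≤ t + r → ContinuousWithinAt g (Ici (t + r)) (t + r) →
      HasDerivWithinAt (fun s => ∫ x in a..(s + r), g x) (g (t + r)) (Ici t) t := by
    intro r har hgr
    have hmaps : MapsTo (· + r) (Ici t) (Ici (t + r)) := fun s hs => add_le_add_left hs r
    simpa [Function.comp_def] using
      (hasDerivWithinAt_Ici_integral_of_locallyIntegrableOn hg har hgr).comp t
        ((hasDerivWithinAt_id t (Ici t)).add_const r) hmaps
  refine ((hshift q (by linarith) hgq).sub (hshift p hap hgp)).congr_of_mem (fun s hs => ?_)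
    self_mem_Ici
  have hs' : t ≤ s := hs
  exact (integral_interval_sub_left (intervalIntegrable_of_locallyIntegrableOn_Ici hg le_rfl
    (by linarith)) (intervalIntegrable_of_locallyIntegrableOn_Ici hg le_rfl (by linarith))).symm

theorem apply_lt_apply_of_neg_feedback {f : ℝ → ℝ} (hfb : ∀ x : ℝ, x ≠ 0 → x * f x < 0)
    {x y : ℝ} (hx : 0 < x) (hy : y < 0) : f x < f y :=
  (neg_of_mul_neg_right (hfb x hx.ne') hx.le).trans (pos_of_mul_neg_right (hfb y hy.ne) hy.le)

theorem deriv_positive_at_first_zero_general (ε τ : ℝ) (hε : ε ∈ Set.Ioo (0:ℝ) (1/4))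
    (hτ : τ ∈ Set.Ioc (0:ℝ) ε)
    (f : ℝ → ℝ) (hf : Continuous f)
    (hfb : ∀ x : ℝ, x ≠ 0 → x * f x < 0)
    (b xb : ℝ → ℝ) (hb : ContinuousOn b (Set.Icc (-1 - ε/2) 0))
    (hbpos : ∀ t ∈ Set.Ioo (-1 - ε/2) (-τ), 0 < b t)
    (hbneg : ∀ t ∈ Set.Ioc (-τ) (0:ℝ), b t < 0)
    (hxbc : ContinuousOn xb (Set.Ici 0))
    (hxb0 : ∀ t ∈ Set.Ico (-1 - ε/2) (0:ℝ), xb t = b t)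
    (hxb : ∀ t : ℝ, 0 ≤ t →
      xb t = (1/ε) * ∫ s in (t - 1 - ε/2)..(t - 1 + ε/2), f (xb s))
    (z1 : ℝ) (hz1a : 1 - τ - ε/2 < z1) (hz1b : z1 < 1 - τ + ε/2)
    (hz1neg : ∀ s ∈ Set.Ico (0:ℝ) z1, xb s < 0)
    (hdiff : DifferentiableAt ℝ xb z1) :
    deriv xb z1 = ε⁻¹ * (f (xb (z1 - 1 + ε/2)) - f (xb (z1 - 1 - ε/2))) ∧
    0 < ε⁻¹ * (f (xb (z1 - 1 + ε/2)) - f (xb (z1 - 1 - ε/2))) := by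
  obtain ⟨hε0, hε4⟩ := hε
  obtain ⟨hτ0, hτε⟩ := hτ
  have hφ : ContinuousOn (fun s => f (b s)) (Icc (-1 - ε/2) 0) := hf.comp_continuousOn hb
  have hgφ : EqOn (fun s => f (xb s)) (fun s => f (b s)) (Ico (-1 - ε/2) 0) :=
    fun s hs => congrArg f (hxb0 s hs)
  have hgc : ContinuousOn (fun s => f (xb s)) (Ici 0) := hf.comp_continuousOn hxbc
  have hwindow := hasDerivWithinAt_Ici_integral_window (p := -1 - ε/2) (q := -1 + ε/2) (t := z1)
    (locallyIntegrableOn_Ici_of_eqOn_Ico hφ hgφ hgc) (by linarith) (by linarith)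
    (continuousWithinAt_Ici_of_eqOn_Ico hφ hgφ hgc (by linarith))
    (continuousWithinAt_Ici_of_eqOn_Ico hφ hgφ hgc (by linarith))
  have hxb_eq : EqOn xb
      (fun t => ε⁻¹ * ∫ s in (t + (-1 - ε/2))..(t + (-1 + ε/2)), f (xb s)) (Ici z1) := by
    intro t ht
    have ht' : z1 ≤ t := ht
    rw [hxb t (by linarith), one_div]
    congr 2 <;> ring
  have hderiv : deriv xb z1 = ε⁻¹ * (f (xb (z1 - 1 + ε/2)) - f (xb (z1 - 1 - ε/2))) := by
    refine (uniqueDiffWithinAt_Ici z1).eq_deriv _ hdiff.hasDerivAt.hasDerivWithinAt ?_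
    convert (hwindow.const_mul ε⁻¹).congr_of_mem hxb_eq self_mem_Ici using 5 <;> ring
  have hxb_right : xb (z1 - 1 + ε/2) < 0 := by
    rcases lt_or_ge (z1 - 1 + ε/2) 0 with hneg | hnonneg
    · rw [hxb0 _ ⟨by linarith, hneg⟩]
      exact hbneg _ ⟨by linarith, hneg.le⟩
    · exact hz1neg _ ⟨hnonneg, by linarith⟩
  have hxb_left : 0 < xb (z1 - 1 - ε/2) := by
    rw [hxb0 _ ⟨by linarith, by linarith⟩]
    exact hbpos _ ⟨by linarith, by linarith⟩
  exact ⟨hderiv, mul_pos (inv_pos.2 hε0)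
    (sub_pos.2 (apply_lt_apply_of_neg_feedback hfb hxb_left hxb_right))⟩

theorem deriv_positive_at_first_zero (ε τ : ℝ) (hε : ε ∈ Set.Ioo (0:ℝ) (1/4))
    (hτ : τ ∈ Set.Ioc (0:ℝ) ε)
    (f : ℝ → ℝ) (hf : Continuous f)
    (hfb : ∀ x : ℝ, x ≠ 0 → x * f x < 0)
    (b xb : ℝ → ℝ) (hb : ContinuousOn b (Set.Icc (-1 - ε/2) 0))
    (hbpos : ∀ t ∈ Set.Ioo (-1 - ε/2) (-τ), 0 < b t)
    (hbneg : ∀ t ∈ Set.Ioc (-τ) (0:ℝ), b t < 0)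
    (hxbc : ContinuousOn xb (Set.Ici 0))
    (hxb0 : ∀ t ∈ Set.Ico (-1 - ε/2) (0:ℝ), xb t = b t)
    (hxb : ∀ t : ℝ, 0 ≤ t →
      xb t = (1/ε) * ∫ s in (t - 1 - ε/2)..(t - 1 + ε/2), f (xb s))
    (z1 : ℝ) (hz1a : 1 - τ - ε/2 < z1) (hz1b : z1 < 1 - τ + ε/2)
    (hz1zero : xb z1 = 0) (hz1neg : ∀ s ∈ Set.Ico (0:ℝ) z1, xb s < 0)
    (hdiff : DifferentiableAt ℝ xb z1) :
    deriv xb z1 = ε⁻¹ * (f (xb (z1 - 1 + ε/2)) - f (xb (z1 - 1 - ε/2))) ∧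
    0 < ε⁻¹ * (f (xb (z1 - 1 + ε/2)) - f (xb (z1 - 1 - ε/2))) :=
  deriv_positive_at_first_zero_general ε τ hε hτ f hf hfb b xb hb hbpos hbneg hxbc hxb0 hxb z1 hz1a
    hz1b hz1neg hdiff
end
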